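/- The automorphism group of the random graph has the finite algebraic closure property: for every finite S ⊆ V, the set of vertices b ∈ V whose orbit under the pointwise stabilizer Aut(R)_(S) is finite equals S itself (in particular, it is finite). -/

import Mathlib

/-- The defining extension property of the random (Rado) graph. -/
def ExtensionProperty {V : Type*} (G : SimpleGraph V) : Prop :=
  ∀ A B : Finset V, Disjoint A B →
    ∃ v : V, (∀ a ∈ A, G.Adj a v) ∧ (∀ b ∈ B, ¬ G.Adj b v)

/-!
If `b ∉ S`, every vertex `v ∉ S` that has the same neighbours in `S` as `b` is the image of `b`
under an automorphism fixing `S` pointwise: the finite partial isomorphism fixing `S` and sending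
`b` to `v` extends to an automorphism by back-and-forth, each step being supplied by the extension
property. The extension property also provides infinitely many such `v`, so the orbit of `b` is
infinite. Points of `S` have trivial orbits.
-/

section

open Finset

variable {V W : Type*}

def witnessSet (G : SimpleGraph V) (A B : Finset V) : Set V :=
  {v | (∀ a ∈ A, G.Adj a v) ∧ ∀ b ∈ B, ¬ G.Adj b v}

theorem ExtensionProperty.infinite_witnessSet {G : SimpleGraph V}
    (hG : ExtensionProperty G) {A B : Finset V} (hAB : Disjoint A B) :
    (witnessSet G A B).Infinite := by
  classical
  intro hfin
  set X := hfin.toFinset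
  -- `x` is adjacent to all of `A ∪ B ∪ X`, so lies outside it; a witness `v` for
  -- `(A ∪ (X \ B), insert x B)` belongs to `X`, yet can lie neither in `B` nor outside it.
  obtain ⟨x, hx, -⟩ := hG (A ∪ B ∪ X) ∅ (disjoint_empty_right _)
  have hxAX : x ∉ A ∪ X := fun h => G.irrefl (hx x (by simp only [mem_union] at h ⊢; tauto))
  have hdisj : Disjoint (A ∪ (X \ B)) (insert x B) :=
    disjoint_insert_right.2 ⟨fun h => hxAX (union_subset_union_right sdiff_subset h),
      disjoint_union_left.2 ⟨hAB, sdiff_disjoint⟩⟩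
  obtain ⟨v, hvA, hvB⟩ := hG _ _ hdisj
  have hvX : v ∈ X := hfin.mem_toFinset.2
    ⟨fun a ha => hvA a (mem_union_left _ ha), fun b hb => hvB b (mem_insert_of_mem hb)⟩
  by_cases hvB' : v ∈ B
  · exact hvB x (mem_insert_self x B) (hx v (by simp [hvB'])).symm
  · exact G.irrefl (hvA v (mem_union_right _ (mem_sdiff.2 ⟨hvX, hvB'⟩)))

def IsPartialIso (G : SimpleGraph V) (H : SimpleGraph W) (R : Set (V × W)) : Prop :=
  ∀ p ∈ R, ∀ q ∈ R, (p.1 = q.1 ↔ p.2 = q.2) ∧ (G.Adj p.1 q.1 ↔ H.Adj p.2 q.2)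

namespace IsPartialIso

variable {G : SimpleGraph V} {H : SimpleGraph W}

theorem swap [DecidableEq V] [DecidableEq W] {f : Finset (V × W)}
    (hf : IsPartialIso G H ↑f) : IsPartialIso H G ↑(f.image Prod.swap) := by
  intro p hp q hq
  obtain ⟨p, hp', rfl⟩ := mem_image.1 hp
  obtain ⟨q, hq', rfl⟩ := mem_image.1 hq
  exact ⟨(hf p hp' q hq').1.symm, (hf p hp' q hq').2.symm⟩

theorem insert [DecidableEq V] [DecidableEq W] {f : Finset (V × W)} (hf : IsPartialIso G H ↑f)
    {a : V} {w : W} (h : ∀ q ∈ f, (a = q.1 ↔ w = q.2) ∧ (G.Adj a q.1 ↔ H.Adj w q.2)) :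
    IsPartialIso G H ↑(insert (a, w) f) := by
  intro p hp q hq
  rcases mem_insert.1 hp with rfl | hp <;> rcases mem_insert.1 hq with rfl | hq
  · exact ⟨iff_of_true rfl rfl, iff_of_false (G.irrefl) (H.irrefl)⟩
  · exact h q hq
  · simpa only [eq_comm, G.adj_comm, H.adj_comm] using h p hp
  · exact hf p hp q hq

theorem exists_insert_left (hH : ExtensionProperty H) {f : Finset (V × W)}
    (hf : IsPartialIso G H ↑f) (a : V) :
    ∃ g : Finset (V × W), IsPartialIso G H ↑g ∧ f ⊆ g ∧ ∃ w, (a, w) ∈ g := by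
  classical
  by_cases ha : ∃ w, (a, w) ∈ f
  · exact ⟨f, hf, Subset.refl f, ha⟩
  push Not at ha
  set A := (f.filter fun p => G.Adj p.1 a).image Prod.snd
  set B := (f.filter fun p => ¬ G.Adj p.1 a).image Prod.snd
  have hAB : Disjoint A B := by
    refine disjoint_left.2 fun x hxA hxB => ?_
    obtain ⟨p, hp, rfl⟩ := mem_image.1 hxA
    obtain ⟨q, hq, hqp⟩ := mem_image.1 hxB
    rw [mem_filter] at hp hq
    exact hq.2 ((hf p hp.1 q hq.1).1.2 hqp.symm ▸ hp.2)
  obtain ⟨w, ⟨hwA, hwB⟩, hwf⟩ :=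
    (hH.infinite_witnessSet hAB).exists_notMem_finset (f.image Prod.snd)
  refine ⟨Insert.insert (a, w) f, hf.insert fun q hq => ⟨?_, ?_⟩, subset_insert _ _,
    w, mem_insert_self _ _⟩
  · exact iff_of_false (fun h => ha q.2 (h ▸ hq)) (fun h => hwf (h ▸ mem_image_of_mem _ hq))
  · by_cases hqa : G.Adj q.1 a
    · exact iff_of_true hqa.symm (hwA _ (mem_image_of_mem _ (mem_filter.2 ⟨hq, hqa⟩))).symm
    · exact iff_of_false (fun h => hqa h.symm)
        (fun h => hwB _ (mem_image_of_mem _ (mem_filter.2 ⟨hq, hqa⟩)) h.symm)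

theorem exists_insert_right (hG : ExtensionProperty G) {f : Finset (V × W)}
    (hf : IsPartialIso G H ↑f) (b : W) :
    ∃ g : Finset (V × W), IsPartialIso G H ↑g ∧ f ⊆ g ∧ ∃ a, (a, b) ∈ g := by
  classical
  obtain ⟨g, hg, hfg, a, ha⟩ := hf.swap.exists_insert_left hG b
  refine ⟨g.image Prod.swap, hg.swap, fun p hp => ?_, a, mem_image_of_mem _ ha⟩
  simpa using mem_image_of_mem Prod.swap (hfg (mem_image_of_mem Prod.swap hp))

theorem exists_iso_of_total {R : Set (V × W)} (hR : IsPartialIso G H R)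
    (hleft : ∀ a, ∃ w, (a, w) ∈ R) (hright : ∀ b, ∃ a, (a, b) ∈ R) :
    ∃ g : G ≃g H, ∀ p ∈ R, g p.1 = p.2 := by
  choose φ hφ using hleft
  choose ψ hψ using hright
  refine ⟨⟨⟨φ, ψ, fun a => ?_, fun b => ?_⟩, fun {a a'} => ?_⟩, fun p hp => ?_⟩
  · exact (hR _ (hψ (φ a)) _ (hφ a)).1.2 rfl
  · exact (hR _ (hφ (ψ b)) _ (hψ b)).1.1 rfl
  · exact (hR _ (hφ a) _ (hφ a')).2.symm
  · exact (hR _ (hφ p.1) _ hp).1.1 rfl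

theorem exists_iso [Countable V] [Countable W] (hG : ExtensionProperty G)
    (hH : ExtensionProperty H) {f : Finset (V × W)} (hf : IsPartialIso G H ↑f) :
    ∃ g : G ≃g H, ∀ p ∈ f, g p.1 = p.2 := by
  have := Encodable.ofCountable V
  have := Encodable.ofCountable W
  let P := {f : Finset (V × W) // IsPartialIso G H ↑f}
  let D : V ⊕ W → Order.Cofinal P
    | .inl a => ⟨{g | ∃ w, (a, w) ∈ g.1}, fun g => by
        obtain ⟨g', hg', hgg', hw⟩ := g.2.exists_insert_left hH a
        exact ⟨⟨g', hg'⟩, hw, hgg'⟩⟩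
    | .inr b => ⟨{g | ∃ a, (a, b) ∈ g.1}, fun g => by
        obtain ⟨g', hg', hgg', ha⟩ := g.2.exists_insert_right hG b
        exact ⟨⟨g', hg'⟩, ha, hgg'⟩⟩
  let I := Order.idealOfCofinals ⟨f, hf⟩ D
  have hR : IsPartialIso G H {p | ∃ g ∈ I, p ∈ g.1} := by
    rintro p ⟨g, hg, hp⟩ q ⟨g', hg', hq⟩
    obtain ⟨m, -, hgm, hg'm⟩ := I.directed _ hg _ hg'
    exact m.2 p (hgm hp) q (hg'm hq)
  obtain ⟨φ, hφ⟩ := hR.exists_iso_of_total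
    (fun a => by
      obtain ⟨g, ⟨w, hw⟩, hg⟩ := Order.cofinal_meets_idealOfCofinals _ D (.inl a)
      exact ⟨w, g, hg, hw⟩)
    (fun b => by
      obtain ⟨g, ⟨a, ha⟩, hg⟩ := Order.cofinal_meets_idealOfCofinals _ D (.inr b)
      exact ⟨a, g, hg, ha⟩)
  exact ⟨φ, fun p hp => hφ p ⟨_, Order.mem_idealOfCofinals _ D, hp⟩⟩

end IsPartialIso

theorem ExtensionProperty.exists_aut_fixing_map [Countable V] {G : SimpleGraph V}
    (hG : ExtensionProperty G) {S : Finset V} {b v : V} (hb : b ∉ S) (hv : v ∉ S)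
    (hbv : ∀ s ∈ S, G.Adj s b ↔ G.Adj s v) :
    ∃ g : G ≃g G, (∀ x ∈ S, g x = x) ∧ g b = v := by
  classical
  have hdiag : IsPartialIso G G ↑(S.image fun s => (s, s)) := by
    intro p hp q hq
    obtain ⟨s, -, rfl⟩ := mem_image.1 hp
    obtain ⟨t, -, rfl⟩ := mem_image.1 hq
    exact ⟨Iff.rfl, Iff.rfl⟩
  have hf := hdiag.insert (a := b) (w := v) fun q hq => by
    obtain ⟨s, hs, rfl⟩ := mem_image.1 hq
    exact ⟨iff_of_false (fun h => hb (h ▸ hs)) (fun h => hv (h ▸ hs)),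
      by simpa only [G.adj_comm] using hbv s hs⟩
  obtain ⟨g, hg⟩ := hf.exists_iso hG hG
  exact ⟨g, fun x hx => hg (x, x) (mem_insert_of_mem (mem_image_of_mem _ hx)),
    hg (b, v) (mem_insert_self _ _)⟩

theorem ExtensionProperty.infinite_orbit [Countable V] {G : SimpleGraph V}
    (hG : ExtensionProperty G) {S : Finset V} {b : V} (hb : b ∉ S) :
    {w : V | ∃ g : G ≃g G, (∀ x ∈ S, g x = x) ∧ g b = w}.Infinite := by
  classical
  have hAB : Disjoint (S.filter (G.Adj · b)) (S.filter fun s => ¬ G.Adj s b) :=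
    disjoint_filter_filter_not S S _
  refine ((hG.infinite_witnessSet hAB).sdiff S.finite_toSet).mono ?_
  rintro v ⟨⟨hvA, hvB⟩, hvS⟩
  refine hG.exists_aut_fixing_map hb hvS fun s hs => ?_
  by_cases hsb : G.Adj s b
  · exact iff_of_true hsb (hvA s (mem_filter.2 ⟨hs, hsb⟩))
  · exact iff_of_false hsb (hvB s (mem_filter.2 ⟨hs, hsb⟩))

end

theorem facp_random_graph_general {V : Type*} [Countable V]
    (G : SimpleGraph V) (hG : ExtensionProperty G) (S : Finset V) :
    {b : V | {w : V | ∃ g : G ≃g G, (∀ x ∈ S, g x = x) ∧ g b = w}.Finite} = ↑S := by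
  ext b
  refine ⟨fun hfin => by_contra fun hb => hG.infinite_orbit hb hfin, fun hb => ?_⟩
  refine (Set.finite_singleton b).subset ?_
  rintro w ⟨g, hgS, rfl⟩
  exact hgS b hb

/-- `Aut(R)` has the finite algebraic closure property: for finite `S ⊆ V`, the set of
vertices with finite orbit under the pointwise stabilizer of `S` equals `S` itself. -/
theorem facp_random_graph {V : Type*} [Countable V] [Infinite V]
    (G : SimpleGraph V) (hG : ExtensionProperty G) (S : Finset V) :
    {b : V | {w : V | ∃ g : G ≃g G, (∀ x ∈ S, g x = x) ∧ g b = w}.Finite} = ↑S :=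
  facp_random_graph_general G hG S
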